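/- For every n ≥ 2, if A and B are geometric hyperplanes of the incidence geometry G_n with A ⊆ B, then A = B; that is, no geometric hyperplane is properly contained in another. -/
import Mathlib


/-- The symplectic vector space `V_n = (ZMod 2)^(2n)` of the n-qubit real Pauli group. -/
abbrev V (n : ℕ) : Type := Fin (2 * n) → ZMod 2

/-- The index `2i-1` (0-based: `2i`). -/
def i0 {n : ℕ} (i : Fin n) : Fin (2 * n) := ⟨2 * i.1, by have := i.isLt; omega⟩

/-- The index `2i` (0-based: `2i+1`). -/
def i1 {n : ℕ} (i : Fin n) : Fin (2 * n) := ⟨2 * i.1 + 1, by have := i.isLt; omega⟩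

/-- The symplectic form `⟨x,y⟩ = Σ_{i=1}^n (x_{2i−1} y_{2i} + x_{2i} y_{2i−1})`. -/
def sform {n : ℕ} (x y : V n) : ZMod 2 :=
  ∑ i : Fin n, (x (i0 i) * y (i1 i) + x (i1 i) * y (i0 i))

/-- The point set `P = V_n \ {0}` of the incidence geometry `G_n`. -/
def P (n : ℕ) : Set (V n) := {x | x ≠ 0}

/-- The line set `L = {{a,b,a+b} : a,b ∈ P, a ≠ b, ⟨a,b⟩ = 0}` of `G_n`. -/
def Lines (n : ℕ) : Set (Set (V n)) :=
  {l | ∃ a b : V n, a ∈ P n ∧ b ∈ P n ∧ a ≠ b ∧ sform a b = 0 ∧ l = {a, b, a + b}}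

/-- A subset `H ⊆ P` satisfies condition (H1) if every line meets it in exactly
one point or is contained in it. -/
def IsH1 {n : ℕ} (H : Set (V n)) : Prop :=
  H ⊆ P n ∧ ∀ l ∈ Lines n, (H ∩ l).ncard = 1 ∨ l ⊆ H

/-- A geometric hyperplane: a subset satisfying (H1) which is not the full point set. -/
def IsHyperplane {n : ℕ} (H : Set (V n)) : Prop := IsH1 H ∧ H ≠ P n

/-- `A ⊞ B`: the complement in `P` of the symmetric difference of `A` and `B`. -/
def boxAdd {n : ℕ} (A B : Set (V n)) : Set (V n) := P n \ (symmDiff A B)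

/-- The quadratic form `Q_0(x) = Σ_{i=1}^n x_{2i−1} x_{2i}`. -/
def Q0 {n : ℕ} (x : V n) : ZMod 2 := ∑ i : Fin n, x (i0 i) * x (i1 i)

/-- The quadratic form `Q_p(x) = Q_0(x) + ⟨p,x⟩`. -/
def Qf {n : ℕ} (p x : V n) : ZMod 2 := Q0 x + sform p x

/-- The perp-set hyperplane `C_p = {x ∈ P : ⟨p,x⟩ = 0}`. -/
def Cset {n : ℕ} (p : V n) : Set (V n) := {x ∈ P n | sform p x = 0}

/-- The quadric hyperplane `H_p = {x ∈ P : Q_p(x) = 0}`. -/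
def Hset {n : ℕ} (p : V n) : Set (V n) := {x ∈ P n | Qf p x = 0}

/-- The symplectic transvection `t_p : x ↦ x + ⟨p,x⟩·p`. -/
def tv {n : ℕ} (p : V n) (x : V n) : V n := x + sform p x • p


section aux
variable {n : ℕ}

lemma two_cases : ∀ z : ZMod 2, z = 0 ∨ z = 1 := by decide
lemma z2_add_self : ∀ z : ZMod 2, z + z = 0 := by decide

lemma sform_comm (x y : V n) : sform x y = sform y x := by
  unfold sform; apply Finset.sum_congr rfl; intro i _; ring

lemma sform_self (x : V n) : sform x x = 0 := by
  unfold sform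
  apply Finset.sum_eq_zero
  intro i _
  rw [mul_comm]; exact z2_add_self _

lemma sform_add_left (x y z : V n) : sform (x + y) z = sform x z + sform y z := by
  unfold sform
  rw [← Finset.sum_add_distrib]
  apply Finset.sum_congr rfl; intro i _
  simp only [Pi.add_apply]; ring

lemma sform_add_right (x y z : V n) : sform x (y + z) = sform x y + sform x z := by
  rw [sform_comm, sform_add_left, sform_comm y x, sform_comm z x]

lemma sform_smul_left (r : ZMod 2) (x y : V n) : sform (r • x) y = r * sform x y := by
  unfold sform
  rw [Finset.mul_sum]
  apply Finset.sum_congr rfl; intro i _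
  simp only [Pi.smul_apply, smul_eq_mul]; ring

lemma sform_smul_right (r : ZMod 2) (x y : V n) : sform x (r • y) = r * sform x y := by
  rw [sform_comm, sform_smul_left, sform_comm]

lemma sform_zero_left (y : V n) : sform 0 y = 0 := by
  unfold sform; apply Finset.sum_eq_zero; intro i _; simp

lemma sform_zero_right (y : V n) : sform y 0 = 0 := by
  rw [sform_comm]; exact sform_zero_left y

lemma addV_self (x : V n) : x + x = 0 := by
  funext k; exact z2_add_self _

lemma addV_eq_zero_iff {x y : V n} : x + y = 0 ↔ x = y := by
  constructor
  · intro h; funext k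
    have := congrFun h k
    have h2 : ∀ u v : ZMod 2, u + v = 0 → u = v := by decide
    exact h2 _ _ this
  · rintro rfl; exact addV_self x

lemma i0_ne_i1 (i j : Fin n) : i0 i ≠ i1 j := by
  simp only [i0, i1, ne_eq, Fin.mk.injEq]; omega

lemma i1_ne_i0 (i j : Fin n) : i1 i ≠ i0 j := by
  simp only [i0, i1, ne_eq, Fin.mk.injEq]; omega

lemma i0_ne_i0 {i j : Fin n} (h : i ≠ j) : i0 i ≠ i0 j := by
  simp only [i0, ne_eq, Fin.mk.injEq]
  have := Fin.val_ne_of_ne h; omega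

lemma i1_ne_i1 {i j : Fin n} (h : i ≠ j) : i1 i ≠ i1 j := by
  simp only [i1, ne_eq, Fin.mk.injEq]
  have := Fin.val_ne_of_ne h; omega

lemma sform_single_i1 (x : V n) (j : Fin n) : sform x (Pi.single (i1 j) 1) = x (i0 j) := by
  unfold sform
  rw [Finset.sum_eq_single j]
  · rw [Pi.single_eq_same, Pi.single_eq_of_ne (i0_ne_i1 j j)]
    ring
  · intro i _ hij
    rw [Pi.single_eq_of_ne (i1_ne_i1 hij), Pi.single_eq_of_ne (i0_ne_i1 i j)]
    ring
  · intro h; exact absurd (Finset.mem_univ j) h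

lemma sform_single_i0 (x : V n) (j : Fin n) : sform x (Pi.single (i0 j) 1) = x (i1 j) := by
  unfold sform
  rw [Finset.sum_eq_single j]
  · rw [Pi.single_eq_same, Pi.single_eq_of_ne (i1_ne_i0 j j)]
    ring
  · intro i _ hij
    rw [Pi.single_eq_of_ne (i0_ne_i0 hij), Pi.single_eq_of_ne (i1_ne_i0 i j)]
    ring
  · intro h; exact absurd (Finset.mem_univ j) h

lemma block_index (k : Fin (2*n)) : ∃ j : Fin n, k = i0 j ∨ k = i1 j := by
  have hklt := k.isLt
  refine ⟨⟨k.1/2, by omega⟩, ?_⟩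
  rcases Nat.even_or_odd k.1 with he | ho
  · left; apply Fin.ext; simp only [i0, Fin.val_mk]
    obtain ⟨m, hm⟩ := he; omega
  · right; apply Fin.ext; simp only [i1, Fin.val_mk]
    obtain ⟨m, hm⟩ := ho; omega

lemma exists_sform_one {v : V n} (hv : v ≠ 0) : ∃ y, sform v y = 1 := by
  have : ∃ k, v k ≠ 0 := by
    by_contra h; push_neg at h; exact hv (funext fun k => h k)
  obtain ⟨k, hk⟩ := this
  have hk1 : v k = 1 := by
    have : ∀ z : ZMod 2, z ≠ 0 → z = 1 := by decide
    exact this _ hk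
  obtain ⟨j, rfl | rfl⟩ := block_index k
  · exact ⟨Pi.single (i1 j) 1, by rw [sform_single_i1]; exact hk1⟩
  · exact ⟨Pi.single (i0 j) 1, by rw [sform_single_i0]; exact hk1⟩

lemma eq_zero_of_sform_all {v : V n} (h : ∀ y, sform y v = 0) : v = 0 := by
  by_contra hv
  obtain ⟨y, hy⟩ := exists_sform_one hv
  rw [sform_comm] at hy
  rw [h y] at hy
  exact zero_ne_one hy

end aux

section aux3
variable {n : ℕ}

lemma exists_pairvals {d z : V n} (hd0 : d ≠ 0) (hz0 : z ≠ 0) (hzd : z ≠ d) :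
    ∃ x, sform x d = 1 ∧ sform x z = 0 := by
  obtain ⟨u', hu'⟩ := exists_sform_one hd0
  have hud : sform u' d = 1 := by rw [sform_comm]; exact hu'
  by_cases hw : ∃ w, sform w d = 0 ∧ sform w z = 1
  · obtain ⟨w, hwd, hwz⟩ := hw
    refine ⟨u' + (sform u' z) • w, ?_, ?_⟩
    · rw [sform_add_left, sform_smul_left, hud, hwd, mul_zero, add_zero]
    · rw [sform_add_left, sform_smul_left, hwz, mul_one]
      exact z2_add_self _
  · exfalso
    push_neg at hw
    have hall : ∀ w, sform w d = 0 → sform w z = 0 := by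
      intro w h
      rcases two_cases (sform w z) with h' | h'
      · exact h'
      · exact absurd h' (hw w h)
    have hzy : ∀ y : V n, sform y z = sform y d * sform u' z := by
      intro y
      have h1 : sform (y + (sform y d) • u') d = 0 := by
        rw [sform_add_left, sform_smul_left, hud, mul_one]
        exact z2_add_self _
      have h2 := hall _ h1
      rw [sform_add_left, sform_smul_left] at h2
      have h3 : ∀ u v : ZMod 2, u + v = 0 → u = v := by decide
      exact h3 _ _ h2
    have hzval : z = (sform u' z) • d := by
      have : ∀ y, sform y (z + (sform u' z) • d) = 0 := by
        intro y
        rw [sform_add_right, sform_smul_right, hzy y, mul_comm]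
        exact z2_add_self _
      have h0 := eq_zero_of_sform_all this
      have := addV_eq_zero_iff.mp h0
      exact this
    rcases two_cases (sform u' z) with h | h
    · rw [h, zero_smul] at hzval; exact hz0 hzval
    · rw [h, one_smul] at hzval; exact hzd hzval

lemma exists_ortho (hn : 2 ≤ n) {v : V n} (hv : v ≠ 0) :
    ∃ w : V n, w ≠ 0 ∧ w ≠ v ∧ sform v w = 0 := by
  have : ∃ k, v k ≠ 0 := by
    by_contra h; push_neg at h; exact hv (funext fun k => h k)
  obtain ⟨k, hk⟩ := this
  have hk1 : v k = 1 := by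
    have : ∀ z : ZMod 2, z ≠ 0 → z = 1 := by decide
    exact this _ hk
  obtain ⟨j, hkj⟩ := block_index k
  set w : V n := v (i0 j) • (Pi.single (i0 j) 1 : V n) + v (i1 j) • (Pi.single (i1 j) 1 : V n) with hw
  have hwi0 : w (i0 j) = v (i0 j) := by
    rw [hw]
    simp only [Pi.add_apply, Pi.smul_apply, smul_eq_mul]
    rw [Pi.single_eq_same, Pi.single_eq_of_ne (i0_ne_i1 j j), mul_one, mul_zero, add_zero]
  have hwi1 : w (i1 j) = v (i1 j) := by
    rw [hw]
    simp only [Pi.add_apply, Pi.smul_apply, smul_eq_mul]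
    rw [Pi.single_eq_same, Pi.single_eq_of_ne (i1_ne_i0 j j), mul_one, mul_zero, zero_add]
  have hwv : sform v w = 0 := by
    rw [hw, sform_add_right, sform_smul_right, sform_smul_right,
      sform_single_i0, sform_single_i1, mul_comm]
    exact z2_add_self _
  have hwk : w k = 1 := by
    rcases hkj with rfl | rfl
    · rw [hwi0]; exact hk1
    · rw [hwi1]; exact hk1
  have hw0 : w ≠ 0 := by
    intro h; rw [h] at hwk; exact zero_ne_one hwk
  by_cases hwv' : w = v
  · -- v is supported on block j; use a single vector in another block
    have hex : ∃ j' : Fin n, j' ≠ j := by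
      by_cases h : j.1 = 0
      · refine ⟨⟨1, by omega⟩, ?_⟩
        intro hh; simp only [Fin.ext_iff, Fin.val_mk] at hh; omega
      · refine ⟨⟨0, by omega⟩, ?_⟩
        intro hh; simp only [Fin.ext_iff, Fin.val_mk] at hh; omega
    obtain ⟨j', hjj'⟩ := hex
    refine ⟨(Pi.single (i0 j') 1 : V n), ?_, ?_, ?_⟩
    · intro h
      have := congrFun h (i0 j')
      rw [Pi.single_eq_same, Pi.zero_apply] at this
      exact one_ne_zero this
    · intro h
      have := congrFun h k
      have hks : (Pi.single (i0 j') 1 : V n) k = 0 := by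
        rcases hkj with rfl | rfl
        · exact Pi.single_eq_of_ne (i0_ne_i0 (Ne.symm hjj')) _
        · exact Pi.single_eq_of_ne (i1_ne_i0 j j') _
      rw [hks, hk1] at this
      exact zero_ne_one this
    · rw [sform_single_i0]
      have : v (i1 j') = w (i1 j') := (congrFun hwv' (i1 j')).symm
      rw [this, hw]
      simp only [Pi.add_apply, Pi.smul_apply, smul_eq_mul]
      rw [Pi.single_eq_of_ne (i1_ne_i0 j' j), Pi.single_eq_of_ne (i1_ne_i1 hjj'),
        mul_zero, mul_zero, add_zero]
  · exact ⟨w, hw0, hwv', hwv⟩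

end aux3

section lines
variable {n : ℕ} {H : Set (V n)}

lemma mem_lines {a b : V n} (ha : a ≠ 0) (hb : b ≠ 0) (hab : a ≠ b) (hs : sform a b = 0) :
    ({a, b, a + b} : Set (V n)) ∈ Lines n := ⟨a, b, ha, hb, hab, hs, rfl⟩

lemma line_finite (a b : V n) : ({a, b, a + b} : Set (V n)).Finite :=
  (Set.finite_singleton _).insert _ |>.insert _

lemma L1 (hH : IsH1 H) {a b : V n} (ha : a ≠ 0) (hb : b ≠ 0) (hab : a ≠ b)
    (hs : sform a b = 0) (haH : a ∈ H) (hbH : b ∈ H) : a + b ∈ H := by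
  rcases hH.2 _ (mem_lines ha hb hab hs) with h | h
  · exfalso
    have hsub : ({a, b} : Set (V n)) ⊆ H ∩ {a, b, a + b} := by
      intro x hx
      rcases hx with rfl | rfl
      · exact ⟨haH, by simp⟩
      · exact ⟨hbH, by simp⟩
    have hfin : (H ∩ ({a, b, a + b} : Set (V n))).Finite :=
      (line_finite a b).inter_of_right H
    have hle := Set.ncard_le_ncard hsub hfin
    rw [Set.ncard_pair hab, h] at hle
    omega
  · exact h (by simp)

lemma L2 (hH : IsH1 H) {a b : V n} (ha : a ≠ 0) (hb : b ≠ 0) (hab : a ≠ b)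
    (hs : sform a b = 0) (haH : a ∉ H) (hbH : b ∉ H) : a + b ∈ H := by
  rcases hH.2 _ (mem_lines ha hb hab hs) with h | h
  · have hne : (H ∩ ({a, b, a + b} : Set (V n))).Nonempty := by
      apply Set.nonempty_of_ncard_ne_zero; omega
    obtain ⟨x, hxH, hxl⟩ := hne
    rcases hxl with rfl | rfl | rfl
    · exact absurd hxH haH
    · exact absurd hxH hbH
    · exact hxH
  · exact absurd (h (by simp)) haH

lemma L3 (hH : IsH1 H) {a b : V n} (ha : a ≠ 0) (hb : b ≠ 0) (hab : a ≠ b)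
    (hs : sform a b = 0) (haH : a ∈ H) (hbH : b ∉ H) : a + b ∉ H := by
  intro habH
  rcases hH.2 _ (mem_lines ha hb hab hs) with h | h
  · have hne : a ≠ a + b := by
      intro hh
      apply hb
      have h2 : a + a = a + (a + b) := by rw [← hh]
      rw [addV_self, ← add_assoc, addV_self, zero_add] at h2
      exact h2.symm
    have hsub : ({a, a + b} : Set (V n)) ⊆ H ∩ {a, b, a + b} := by
      intro x hx
      rcases hx with rfl | rfl
      · exact ⟨haH, by simp⟩
      · exact ⟨habH, by simp⟩
    have hfin : (H ∩ ({a, b, a + b} : Set (V n))).Finite :=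
      (line_finite a b).inter_of_right H
    have hle := Set.ncard_le_ncard hsub hfin
    rw [Set.ncard_pair hne, h] at hle
    omega
  · exact hbH (h (by simp))

lemma key0 {A B : Set (V n)} (hA : IsH1 A) (hB : IsH1 B) (hAB : A ⊆ B)
    {b c : V n} (hbB : b ∈ B) (hbA : b ∉ A) (hcP : c ∈ P n) (hcB : c ∉ B)
    (hbc : sform b c = 0) : False := by
  have hb0 : b ≠ 0 := hB.1 hbB
  have hc0 : c ≠ 0 := hcP
  have hbc_ne : b ≠ c := fun h => hcB (h ▸ hbB)
  have hcA : c ∉ A := fun h => hcB (hAB h)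
  have h1 : b + c ∈ A := L2 hA hb0 hc0 hbc_ne hbc hbA hcA
  have h2 : b + c ∉ B := L3 hB hb0 hc0 hbc_ne hbc hbB hcB
  exact h2 (hAB h1)

end lines

theorem stmt4 (n : ℕ) (hn : 2 ≤ n) (A B : Set (V n)) (hA : IsHyperplane A)
    (hB : IsHyperplane B) (hAB : A ⊆ B) : A = B := by
  by_contra hne
  obtain ⟨b, hbB, hbA⟩ := Set.exists_of_ssubset (ssubset_of_subset_of_ne hAB hne)
  obtain ⟨c, hcP, hcB⟩ := Set.exists_of_ssubset (ssubset_of_subset_of_ne hB.1.1 hB.2)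
  have hb0 : b ≠ 0 := hB.1.1 hbB
  have hc0 : c ≠ 0 := hcP
  -- case on the pairing of b and c
  rcases two_cases (sform b c) with h0 | hbc1
  · exact key0 hA.1 hB.1 hAB hbB hbA hcP hcB h0
  -- now ⟨b,c⟩ = 1; set d = b + c
  set d := b + c with hd
  have hbcne : b ≠ c := fun h => hcB (h ▸ hbB)
  have hd0 : d ≠ 0 := fun h => hbcne (addV_eq_zero_iff.mp h)
  have hdb : sform d b = 1 := by
    rw [hd, sform_add_left, sform_self, sform_comm c b, hbc1, zero_add]
  have hdc : sform d c = 1 := by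
    rw [hd, sform_add_left, sform_self, hbc1, add_zero]
  by_cases hex : ∃ a ∈ A, sform a d = 1
  · -- an element of A pairing differently with b and c
    obtain ⟨a, haA, had⟩ := hex
    have haB := hAB haA
    have ha0 : a ≠ 0 := hA.1.1 haA
    have hadsplit : sform a b + sform a c = 1 := by
      rw [← sform_add_right, ← hd, had]
    rcases two_cases (sform a b) with hab0 | hab1
    · -- b' = a + b works against c
      have hac : sform a c = 1 := by rw [hab0, zero_add] at hadsplit; exact hadsplit
      have habne : a ≠ b := fun h => hbA (h ▸ haA)
      have h1 : a + b ∈ B := L1 hB.1 ha0 hb0 habne hab0 haB hbB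
      have h2 : a + b ∉ A := L3 hA.1 ha0 hb0 habne hab0 haA hbA
      have hs : sform (a + b) c = 0 := by
        rw [sform_add_left, hac, hbc1]; exact z2_add_self 1
      exact key0 hA.1 hB.1 hAB h1 h2 hcP hcB hs
    · -- c' = a + c works against b
      have hac : sform a c = 0 := by
        have : ∀ u : ZMod 2, 1 + u = 1 → u = 0 := by decide
        rw [hab1] at hadsplit; exact this _ hadsplit
      have hacne : a ≠ c := fun h => hcB (h ▸ haB)
      have h1 : a + c ∉ B := L3 hB.1 ha0 hc0 hacne hac haB hcB
      have h2 : a + c ∈ P n := fun h => hacne (addV_eq_zero_iff.mp h)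
      have hs : sform b (a + c) = 0 := by
        rw [sform_add_right, sform_comm b a, hab1, hbc1]; exact z2_add_self 1
      exact key0 hA.1 hB.1 hAB hbB hbA h2 h1 hs
  -- otherwise A ⊆ d^⊥
  push_neg at hex
  have hAd : ∀ a ∈ A, sform a d = 0 := by
    intro a ha
    rcases two_cases (sform a d) with h | h
    · exact h
    · exact absurd h (hex a ha)
  -- every nonzero z ≠ d with ⟨z,d⟩ = 0 lies in A
  have hCsub : ∀ z : V n, z ≠ 0 → z ≠ d → sform z d = 0 → z ∈ A := by
    intro z hz0 hzd hzdf
    obtain ⟨x, hxd, hxz⟩ := exists_pairvals hd0 hz0 hzd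
    have hx0 : x ≠ 0 := by
      intro h; rw [h, sform_zero_left] at hxd; exact zero_ne_one hxd
    have hxzne : x ≠ x + z := by
      intro hh
      apply hz0
      have h2 : x + x = x + (x + z) := by rw [← hh]
      rw [addV_self, ← add_assoc, addV_self, zero_add] at h2
      exact h2.symm
    have hxz0 : x + z ≠ 0 := by
      intro h
      have hxez := addV_eq_zero_iff.mp h
      rw [hxez, hzdf] at hxd
      exact absurd hxd (by decide)
    have hxA : x ∉ A := by
      intro h
      rw [hAd x h] at hxd
      exact absurd hxd (by decide)
    have hxzA : x + z ∉ A := by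
      intro h
      have := hAd _ h
      rw [sform_add_left, hxd, hzdf, add_zero] at this
      exact absurd this (by decide)
    have hsxz : sform x (x + z) = 0 := by
      rw [sform_add_right, sform_self, hxz, add_zero]
    have := L2 hA.1 hx0 hxz0 hxzne hsxz hxA hxzA
    rwa [← add_assoc, addV_self, zero_add] at this
  -- d itself lies in A
  have hdA : d ∈ A := by
    obtain ⟨w, hw0, hwd, hwform⟩ := exists_ortho hn hd0
    have hwd' : sform w d = 0 := by rw [sform_comm]; exact hwform
    have hwA : w ∈ A := hCsub w hw0 hwd hwd'
    have hdw0 : d + w ≠ 0 := fun h => hwd (addV_eq_zero_iff.mp h).symm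
    have hdwd : d + w ≠ d := by
      intro hh
      apply hw0
      have h2 : d + d = d + (d + w) := by rw [hh]
      rw [addV_self, ← add_assoc, addV_self, zero_add] at h2
      exact h2.symm
    have hdwf : sform (d + w) d = 0 := by
      rw [sform_add_left, sform_self, hwd', add_zero]
    have hdwA : d + w ∈ A := hCsub (d + w) hdw0 hdwd hdwf
    have hwdw : w ≠ d + w := by
      intro hh
      apply hd0
      have h2 : w + w = w + (d + w) := by rw [← hh]
      rw [addV_self, add_comm d w, ← add_assoc, addV_self, zero_add] at h2
      exact h2.symm
    have hsf : sform w (d + w) = 0 := by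
      rw [sform_add_right, sform_self, hwd', add_zero]
    have := L1 hA.1 hw0 hdw0 hwdw hsf hwA hdwA
    rwa [add_comm d w, ← add_assoc, addV_self, zero_add] at this
  -- so A contains all nonzero vectors orthogonal to d
  have hAeq : ∀ x : V n, x ≠ 0 → sform x d = 0 → x ∈ A := by
    intro x hx0 hxd
    by_cases hxd' : x = d
    · exact hxd' ▸ hdA
    · exact hCsub x hx0 hxd' hxd
  -- any element of B \ A pairs to 1 with any element of P \ B
  have hpair : ∀ b' ∈ B, b' ∉ A → ∀ c', c' ∈ P n → c' ∉ B → sform b' c' = 1 := by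
    intro b' hb'B hb'A c' hc'P hc'B
    rcases two_cases (sform b' c') with h | h
    · exact (key0 hA.1 hB.1 hAB hb'B hb'A hc'P hc'B h).elim
    · exact h
  -- every point outside B equals b + d
  have huniq : ∀ c', c' ∈ P n → c' ∉ B → c' = b + d := by
    intro c' hc'P hc'B
    have hc'0 : c' ≠ 0 := hc'P
    have hc'b : sform b c' = 1 := hpair b hbB hbA c' hc'P hc'B
    have hc'd : sform c' d = 1 := by
      rcases two_cases (sform c' d) with h | h
      · exact absurd (hAB (hAeq c' hc'0 h)) hc'B
      · exact h
    have hkey : ∀ x : V n, x ≠ 0 → sform x d = 0 → sform x b = 0 → sform x c' = 0 := by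
      intro x hx0 hxd hxb
      have hxA : x ∈ A := hAeq x hx0 hxd
      have hxbne : x ≠ b := fun h => hbA (h ▸ hxA)
      have h1 : x + b ∈ B := L1 hB.1 hx0 hb0 hxbne hxb (hAB hxA) hbB
      have h2 : x + b ∉ A := L3 hA.1 hx0 hb0 hxbne hxb hxA hbA
      have h3 := hpair (x + b) h1 h2 c' hc'P hc'B
      rw [sform_add_left, hc'b] at h3
      have : ∀ u : ZMod 2, u + 1 = 1 → u = 0 := by decide
      exact this _ h3
    -- projection argument: e = c' + b + d must vanish
    set e := c' + b + d with he
    have hbd1 : sform b d = 1 := by rw [sform_comm]; exact hdb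
    have heb : sform e b = 0 := by
      rw [he, sform_add_left, sform_add_left, sform_comm c' b, hc'b, sform_self, hdb]
      decide
    have hed : sform e d = 0 := by
      rw [he, sform_add_left, sform_add_left, hc'd, hbd1, sform_self]
      decide
    have he0 : e = 0 := by
      by_contra he0
      obtain ⟨y0, hy0⟩ := exists_sform_one he0
      rw [sform_comm] at hy0
      set y := y0 + (sform y0 d) • b + (sform y0 b) • d with hy
      have hyd : sform y d = 0 := by
        rw [hy, sform_add_left, sform_add_left, sform_smul_left, sform_smul_left,
          hbd1, sform_self, mul_one, mul_zero, add_zero]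
        exact z2_add_self _
      have hyb : sform y b = 0 := by
        rw [hy, sform_add_left, sform_add_left, sform_smul_left, sform_smul_left,
          sform_self, hdb, mul_zero, add_zero, mul_one]
        exact z2_add_self _
      have hye : sform y e = 1 := by
        rw [hy, sform_add_left, sform_add_left, sform_smul_left, sform_smul_left,
          hy0, sform_comm b e, heb, sform_comm d e, hed, mul_zero, mul_zero,
          add_zero, add_zero]
      have hy0' : y ≠ 0 := by
        intro h; rw [h, sform_zero_left] at hye; exact absurd hye (by decide)
      have hyc := hkey y hy0' hyd hyb
      rw [he, sform_add_right, sform_add_right, hyc, hyb, hyd] at hye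
      exact absurd hye (by decide)
    -- conclude c' = b + d
    have : c' + (b + d) = 0 := by
      rw [← add_assoc, ← he]; exact he0
    exact addV_eq_zero_iff.mp this
  -- final contradiction: P \ B = {b + d}, impossible
  have hceq : c = b + d := huniq c hcP hcB
  obtain ⟨w, hw0, hwc, hwform⟩ := exists_ortho hn hc0
  have hwP : w ∈ P n := hw0
  have hwB : w ∈ B := by
    by_contra hwB
    exact hwc (hceq ▸ huniq w hwP hwB)
  have hwcB : w + c ∉ B := L3 hB.1 hw0 hc0 hwc (by rw [sform_comm]; exact hwform) hwB hcB
  apply hwcB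
  have hwc0 : w + c ≠ 0 := fun h => hwc (addV_eq_zero_iff.mp h)
  have hwcP : w + c ∈ P n := hwc0
  by_contra hwcB'
  have := huniq (w + c) hwcP hwcB'
  rw [← hceq] at this
  apply hw0
  have h2 : (w + c) + c = c + c := by rw [this]
  rw [add_assoc, addV_self, add_zero] at h2
  exact h2
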